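/- arXiv:math/0103007 — 4 statements merged into one kernel-verified Lean document; each statement's English description precedes it below -/
import Mathlib

section
/- Under the assumptions of the previous statement, the relative entropy of the tilted measure W with respect to P × Q equals λ*D − Λ(λ*). Consequently R₁(P,Q,D) := inf { H(W'‖P×Q) : W' has first marginal P and E_{W'}[ρ] ≤ D } satisfies R₁(P,Q,D) ≤ λ*D − Λ(λ*). -/
/-!
Write `Λ(l) = ∫ cgf (ρ x) Q l ∂P`. For `l < 0` the derivative of `cgf (ρ x) Q` at `l` is the mean
of `ρ x` under `Q` tilted by `l • ρ x`; by Chebyshev's association inequality (`ρ` and `exp (l ρ)`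
are oppositely ordered) it lies between `0` and `Q[ρ x]`, which is `P`-integrable. So `Λ` can be
differentiated under the integral sign, and `D = Λ'(λ*)` is the `W`-mean of `ρ`. Since
`log (dW/d(P×Q)) = λ* ρ - cgf (ρ x) Q λ*` and the first marginal of `W` is `P`, integrating against
`W` gives `H(W‖P×Q) = λ* D - Λ(λ*)`, and `W` is admissible for `R₁`. The `sInf` of a real set that is
not bounded below is `0`, so the bound on `R₁` also needs Gibbs' inequality `0 ≤ H(W‖P×Q)`.
-/

open MeasureTheory Real

/-- Relative entropy `H(μ‖ν) = ∫ log (dμ/dν) dμ` (real-valued; used under `μ ≪ ν`). -/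
noncomputable def relEntropy {Ω : Type*} [MeasurableSpace Ω] (μ ν : Measure Ω) : ℝ :=
  ∫ x, Real.log (μ.rnDeriv ν x).toReal ∂μ

open ProbabilityTheory InformationTheory Filter Set Function
open scoped ENNReal

section Moments

variable {Ω : Type*} [MeasurableSpace Ω] {μ : Measure Ω} {X : Ω → ℝ} {t : ℝ}

theorem integral_mul_le_integral_mul_integral_of_antitone [IsProbabilityMeasure μ] {φ : ℝ → ℝ}
    (hφ : Antitone φ) (hX : Integrable X μ) (hφX : Integrable (fun ω ↦ φ (X ω)) μ)
    (hXφX : Integrable (fun ω ↦ X ω * φ (X ω)) μ) :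
    ∫ ω, X ω * φ (X ω) ∂μ ≤ (∫ ω, X ω ∂μ) * ∫ ω, φ (X ω) ∂μ := by
  set m := ∫ ω, X ω ∂μ
  -- `X ω - m` and `φ (X ω) - φ m` have opposite signs
  have hpt : ∀ ω, X ω * φ (X ω) ≤ m * φ (X ω) + φ m * (X ω - m) := fun ω ↦ by
    rcases le_total (X ω) m with h | h <;> nlinarith [hφ h]
  have hsub : Integrable (fun ω ↦ X ω - m) μ := hX.sub (integrable_const m)
  calc ∫ ω, X ω * φ (X ω) ∂μ ≤ ∫ ω, (m * φ (X ω) + φ m * (X ω - m)) ∂μ :=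
        integral_mono hXφX ((hφX.const_mul m).add (hsub.const_mul _)) hpt
    _ = m * ∫ ω, φ (X ω) ∂μ := by
        rw [integral_add (hφX.const_mul m) (hsub.const_mul _), integral_const_mul,
          integral_const_mul, integral_sub hX (integrable_const m)]
        simp [m]

lemma integrable_exp_mul_of_nonneg_of_nonpos [IsFiniteMeasure μ] (hX : AEMeasurable X μ)
    (hX0 : ∀ ω, 0 ≤ X ω) (ht : t ≤ 0) : Integrable (fun ω ↦ exp (t * X ω)) μ :=
  .of_bound (hX.const_mul t).exp.aestronglyMeasurable 1 <| ae_of_all _ fun ω ↦ by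
    rw [norm_of_nonneg (exp_pos _).le, exp_le_one_iff]
    exact mul_nonpos_of_nonpos_of_nonneg ht (hX0 ω)

lemma Iio_subset_interior_integrableExpSet [IsFiniteMeasure μ] (hX : AEMeasurable X μ)
    (hX0 : ∀ ω, 0 ≤ X ω) : Iio 0 ⊆ interior (integrableExpSet X μ) := by
  rw [← interior_Iic]
  exact interior_mono fun t ht ↦ integrable_exp_mul_of_nonneg_of_nonpos hX hX0 ht

lemma abs_deriv_cgf_le [IsProbabilityMeasure μ] (hX : Integrable X μ) (hX0 : ∀ ω, 0 ≤ X ω)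
    (ht : t < 0) : |deriv (cgf X μ) t| ≤ μ[X] := by
  have ht' := Iio_subset_interior_integrableExpSet hX.aemeasurable hX0 ht
  have hexp := integrable_exp_mul_of_nonneg_of_nonpos hX.aemeasurable hX0 ht.le
  rw [deriv_cgf ht', abs_of_nonneg (div_nonneg
    (integral_nonneg fun ω ↦ mul_nonneg (hX0 ω) (exp_pos _).le) mgf_nonneg),
    div_le_iff₀ (mgf_pos hexp)]
  exact integral_mul_le_integral_mul_integral_of_antitone
    (fun a b hab ↦ exp_le_exp.2 (mul_le_mul_of_nonpos_left hab ht.le)) hX hexp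
    (by simpa using integrable_pow_mul_exp_of_mem_interior_integrableExpSet ht' 1)

lemma mul_integral_le_cgf [IsProbabilityMeasure μ] (hX : Integrable X μ)
    (ht : Integrable (fun ω ↦ exp (t * X ω)) μ) : t * μ[X] ≤ cgf X μ t := by
  rw [cgf, le_log_iff_exp_le (mgf_pos ht), ← integral_const_mul]
  exact convexOn_exp.map_integral_le continuousOn_exp isClosed_univ
    (ae_of_all _ fun _ ↦ mem_univ _) (hX.const_mul t) ht

lemma cgf_nonpos [IsProbabilityMeasure μ] (hX0 : ∀ ω, 0 ≤ X ω) (ht : t ≤ 0) :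
    cgf X μ t ≤ 0 := by
  have h := mgf_anti_of_nonpos (μ := μ) (X := 0) (Y := X) (ae_of_all _ hX0) ht (by simp)
  rw [mgf_zero_fun, probReal_univ] at h
  exact log_nonpos mgf_nonneg h

lemma abs_cgf_le [IsProbabilityMeasure μ] (hX : Integrable X μ) (hX0 : ∀ ω, 0 ≤ X ω)
    (ht : t ≤ 0) : |cgf X μ t| ≤ -t * μ[X] := by
  rw [abs_of_nonpos (cgf_nonpos hX0 ht)]
  linarith [mul_integral_le_cgf hX (integrable_exp_mul_of_nonneg_of_nonpos hX.aemeasurable hX0 ht)]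

end Moments

lemma relEntropy_nonneg {Ω : Type*} [MeasurableSpace Ω] {μ ν : Measure Ω} [IsProbabilityMeasure μ]
    [IsProbabilityMeasure ν] (hμν : μ ≪ ν) (h_int : Integrable (llr μ ν) μ) :
    0 ≤ relEntropy μ ν := by
  simpa [relEntropy, llr] using integral_llr_add_sub_measure_univ_nonneg hμν h_int

section WithDensityOfReal

variable {α : Type*} [MeasurableSpace α] {μ : Measure α} {f : α → ℝ}

lemma integral_withDensity_ofReal (hf : Measurable f) (hf0 : ∀ x, 0 ≤ f x) (g : α → ℝ) :
    ∫ x, g x ∂μ.withDensity (fun x ↦ ENNReal.ofReal (f x)) = ∫ x, f x * g x ∂μ := by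
  rw [integral_withDensity_eq_integral_toReal_smul hf.ennreal_ofReal
    (ae_of_all _ fun _ ↦ ENNReal.ofReal_lt_top)]
  simp_rw [ENNReal.toReal_ofReal (hf0 _), smul_eq_mul]

lemma integrable_withDensity_ofReal_iff (hf : Measurable f) (hf0 : ∀ x, 0 ≤ f x) {g : α → ℝ} :
    Integrable g (μ.withDensity fun x ↦ ENNReal.ofReal (f x)) ↔
      Integrable (fun x ↦ f x * g x) μ := by
  rw [integrable_withDensity_iff_integrable_smul' hf.ennreal_ofReal
    (ae_of_all _ fun _ ↦ ENNReal.ofReal_lt_top)]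
  simp_rw [ENNReal.toReal_ofReal (hf0 _), smul_eq_mul]

end WithDensityOfReal

lemma map_fst_withDensity_prod {A B : Type*} [MeasurableSpace A] [MeasurableSpace B]
    {P : Measure A} {Q : Measure B} [SFinite P] [SFinite Q] {F : A × B → ℝ≥0∞}
    (hF : Measurable F) (hF1 : ∀ x, ∫⁻ y, F (x, y) ∂Q = 1) :
    ((P.prod Q).withDensity F).map Prod.fst = P := by
  ext s hs
  rw [Measure.map_apply measurable_fst hs, withDensity_apply _ (measurable_fst hs),
    ← prod_univ, ← Measure.prod_restrict, Measure.restrict_univ, lintegral_prod _ hF.aemeasurable]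
  simp [hF1]

section TiltedProduct

variable {A B : Type*} [MeasurableSpace B] {Q : Measure B} {ρ : A → B → ℝ} {t : ℝ}

noncomputable def tiltedDensity (Q : Measure B) (ρ : A → B → ℝ) (t : ℝ) (p : A × B) : ℝ :=
  exp (t * ρ p.1 p.2) / mgf (ρ p.1) Q t

lemma integral_tiltedDensity_mul (x : A) (g : B → ℝ) :
    ∫ y, tiltedDensity Q ρ t (x, y) * g y ∂Q = ∫ y, g y ∂Q.tilted (t * ρ x ·) := by
  simp_rw [integral_tilted_mul_eq_mgf, smul_eq_mul]
  rfl

variable [MeasurableSpace A] {P : Measure A}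

noncomputable def tiltedProd (P : Measure A) (Q : Measure B) (ρ : A → B → ℝ) (t : ℝ) :
    Measure (A × B) :=
  (P.prod Q).withDensity fun p ↦ ENNReal.ofReal (tiltedDensity Q ρ t p)

lemma measurable_mgf_of_measurable_uncurry [SFinite Q] (hρ : Measurable (uncurry ρ)) (t : ℝ) :
    Measurable fun x ↦ mgf (ρ x) Q t :=
  ((hρ.const_mul t).exp.stronglyMeasurable.integral_prod_right').measurable

lemma measurable_deriv_cgf_of_measurable_uncurry [IsFiniteMeasure Q]
    (hρ : Measurable (uncurry ρ)) (hρ0 : ∀ x y, 0 ≤ ρ x y) (ht : t < 0) :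
    Measurable fun x ↦ deriv (cgf (ρ x) Q) t := by
  have h x : deriv (cgf (ρ x) Q) t = (∫ y, ρ x y * exp (t * ρ x y) ∂Q) / mgf (ρ x) Q t :=
    deriv_cgf (Iio_subset_interior_integrableExpSet hρ.of_uncurry_left.aemeasurable (hρ0 x) ht)
  simp_rw [h]
  exact ((hρ.mul (hρ.const_mul t).exp).stronglyMeasurable.integral_prod_right').measurable.div
    (measurable_mgf_of_measurable_uncurry hρ t)

lemma measurable_tiltedDensity [SFinite Q] (hρ : Measurable (uncurry ρ)) :
    Measurable (tiltedDensity Q ρ t) :=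
  (hρ.const_mul t).exp.div ((measurable_mgf_of_measurable_uncurry hρ t).comp measurable_fst)

section NonzeroFinite

variable [IsFiniteMeasure Q] [NeZero Q]

lemma mgf_pos_of_nonneg_of_nonpos (hρ : Measurable (uncurry ρ)) (hρ0 : ∀ x y, 0 ≤ ρ x y)
    (ht : t ≤ 0) (x : A) : 0 < mgf (ρ x) Q t :=
  integral_exp_pos
    (integrable_exp_mul_of_nonneg_of_nonpos hρ.of_uncurry_left.aemeasurable (hρ0 x) ht)

lemma tiltedDensity_pos (hρ : Measurable (uncurry ρ)) (hρ0 : ∀ x y, 0 ≤ ρ x y) (ht : t ≤ 0)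
    (p : A × B) : 0 < tiltedDensity Q ρ t p :=
  div_pos (exp_pos _) (mgf_pos_of_nonneg_of_nonpos hρ hρ0 ht p.1)

lemma log_tiltedDensity (hρ : Measurable (uncurry ρ)) (hρ0 : ∀ x y, 0 ≤ ρ x y) (ht : t ≤ 0)
    (p : A × B) : log (tiltedDensity Q ρ t p) = t * ρ p.1 p.2 - cgf (ρ p.1) Q t := by
  rw [tiltedDensity, log_div (exp_pos _).ne' (mgf_pos_of_nonneg_of_nonpos hρ hρ0 ht p.1).ne',
    log_exp, cgf]

lemma lintegral_tiltedDensity (hρ : Measurable (uncurry ρ)) (hρ0 : ∀ x y, 0 ≤ ρ x y)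
    (ht : t ≤ 0) (x : A) : ∫⁻ y, ENNReal.ofReal (tiltedDensity Q ρ t (x, y)) ∂Q = 1 := by
  have := isProbabilityMeasure_tilted (μ := Q)
    (integrable_exp_mul_of_nonneg_of_nonpos hρ.of_uncurry_left.aemeasurable (hρ0 x) ht)
  rw [← measure_univ (μ := Q.tilted (t * ρ x ·)), tilted_apply' _ _ MeasurableSet.univ,
    setLIntegral_univ]
  rfl

lemma map_fst_tiltedProd [SFinite P] (hρ : Measurable (uncurry ρ)) (hρ0 : ∀ x y, 0 ≤ ρ x y)
    (ht : t ≤ 0) : (tiltedProd P Q ρ t).map Prod.fst = P :=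
  map_fst_withDensity_prod (Q := Q) (measurable_tiltedDensity hρ).ennreal_ofReal
    (lintegral_tiltedDensity hρ hρ0 ht)

lemma isProbabilityMeasure_tiltedProd [IsProbabilityMeasure P] (hρ : Measurable (uncurry ρ))
    (hρ0 : ∀ x y, 0 ≤ ρ x y) (ht : t ≤ 0) : IsProbabilityMeasure (tiltedProd P Q ρ t) := by
  rw [← Measure.isProbabilityMeasure_map_iff measurable_fst.aemeasurable,
    map_fst_tiltedProd hρ hρ0 ht]
  infer_instance

lemma llr_tiltedProd [SigmaFinite P] (hρ : Measurable (uncurry ρ)) (hρ0 : ∀ x y, 0 ≤ ρ x y)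
    (ht : t ≤ 0) :
    llr (tiltedProd P Q ρ t) (P.prod Q) =ᵐ[tiltedProd P Q ρ t]
      fun p ↦ t * ρ p.1 p.2 - cgf (ρ p.1) Q t := by
  unfold tiltedProd
  filter_upwards [(withDensity_absolutelyContinuous _ _).ae_le
    (Measure.rnDeriv_withDensity (P.prod Q) (measurable_tiltedDensity (Q := Q) hρ).ennreal_ofReal)]
    with p hp
  rw [llr, hp, ENNReal.toReal_ofReal (tiltedDensity_pos hρ hρ0 ht p).le,
    log_tiltedDensity hρ hρ0 ht]

end NonzeroFinite

variable [IsProbabilityMeasure Q]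

lemma integral_tiltedDensity_mul_self (hρ : Measurable (uncurry ρ)) (hρ0 : ∀ x y, 0 ≤ ρ x y)
    (ht : t < 0) (x : A) : ∫ y, tiltedDensity Q ρ t (x, y) * ρ x y ∂Q = deriv (cgf (ρ x) Q) t := by
  rw [integral_tiltedDensity_mul, integral_tilted_mul_self
    (Iio_subset_interior_integrableExpSet (μ := Q) hρ.of_uncurry_left.aemeasurable (hρ0 x) ht)]

lemma integrable_cgf_of_integrable_prod [SFinite P] (hρ : Measurable (uncurry ρ))
    (hρ0 : ∀ x y, 0 ≤ ρ x y) (hint : Integrable (fun p : A × B ↦ ρ p.1 p.2) (P.prod Q))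
    (ht : t ≤ 0) : Integrable (fun x ↦ cgf (ρ x) Q t) P := by
  refine .mono' (hint.integral_prod_left.const_mul (-t))
    (measurable_mgf_of_measurable_uncurry hρ t).log.aestronglyMeasurable ?_
  filter_upwards [hint.prod_right_ae] with x hx
  exact abs_cgf_le hx (hρ0 x) ht

lemma integrable_deriv_cgf_of_integrable_prod [SFinite P] (hρ : Measurable (uncurry ρ))
    (hρ0 : ∀ x y, 0 ≤ ρ x y) (hint : Integrable (fun p : A × B ↦ ρ p.1 p.2) (P.prod Q))
    (ht : t < 0) : Integrable (fun x ↦ deriv (cgf (ρ x) Q) t) P := by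
  refine .mono' hint.integral_prod_left
    (measurable_deriv_cgf_of_measurable_uncurry hρ hρ0 ht).aestronglyMeasurable ?_
  filter_upwards [hint.prod_right_ae] with x hx
  exact abs_deriv_cgf_le hx (hρ0 x) ht

theorem hasDerivAt_integral_cgf [SFinite P] (hρ : Measurable (uncurry ρ))
    (hρ0 : ∀ x y, 0 ≤ ρ x y) (hint : Integrable (fun p : A × B ↦ ρ p.1 p.2) (P.prod Q))
    (ht : t < 0) :
    HasDerivAt (fun l ↦ ∫ x, cgf (ρ x) Q l ∂P) (∫ x, deriv (cgf (ρ x) Q) t ∂P) t := by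
  refine (hasDerivAt_integral_of_dominated_loc_of_deriv_le (Iio_mem_nhds ht)
    (Eventually.of_forall fun l ↦
      (measurable_mgf_of_measurable_uncurry hρ l).log.aestronglyMeasurable)
    (integrable_cgf_of_integrable_prod hρ hρ0 hint ht.le)
    (measurable_deriv_cgf_of_measurable_uncurry hρ hρ0 ht).aestronglyMeasurable
    (F' := fun l x ↦ deriv (cgf (ρ x) Q) l) (bound := fun x ↦ ∫ y, ρ x y ∂Q) ?_
    hint.integral_prod_left ?_).2
  · filter_upwards [hint.prod_right_ae] with x hx l hl using abs_deriv_cgf_le hx (hρ0 x) hl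
  · refine ae_of_all _ fun x l hl ↦ (analyticAt_cgf ?_).differentiableAt.hasDerivAt
    exact Iio_subset_interior_integrableExpSet hρ.of_uncurry_left.aemeasurable (hρ0 x) hl

lemma integrable_tiltedDensity_mul [SFinite P] (hρ : Measurable (uncurry ρ))
    (hρ0 : ∀ x y, 0 ≤ ρ x y) (hint : Integrable (fun p : A × B ↦ ρ p.1 p.2) (P.prod Q))
    (ht : t < 0) : Integrable (fun p ↦ tiltedDensity Q ρ t p * ρ p.1 p.2) (P.prod Q) := by
  refine (integrable_prod_iff (f := fun p ↦ tiltedDensity Q ρ t p * ρ p.1 p.2)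
    ((measurable_tiltedDensity hρ).mul hρ).aestronglyMeasurable).2 ⟨ae_of_all _ fun x ↦ ?_, ?_⟩
  · have hx := Iio_subset_interior_integrableExpSet (μ := Q) hρ.of_uncurry_left.aemeasurable
      (hρ0 x) ht
    refine ((integrable_pow_mul_exp_of_mem_interior_integrableExpSet hx 1).div_const
      (mgf (ρ x) Q t)).congr (ae_of_all _ fun y ↦ ?_)
    simp only [tiltedDensity, pow_one]
    ring
  · refine (integrable_deriv_cgf_of_integrable_prod hρ hρ0 hint ht).congr
      (ae_of_all _ fun x ↦ ?_)
    dsimp only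
    rw [← integral_tiltedDensity_mul_self hρ hρ0 ht x]
    refine integral_congr_ae (ae_of_all _ fun y ↦ ?_)
    exact (norm_of_nonneg (mul_nonneg (tiltedDensity_pos hρ hρ0 ht.le _).le (hρ0 x y))).symm

lemma integrable_tiltedProd_of_integrable_prod [SFinite P] (hρ : Measurable (uncurry ρ))
    (hρ0 : ∀ x y, 0 ≤ ρ x y) (hint : Integrable (fun p : A × B ↦ ρ p.1 p.2) (P.prod Q))
    (ht : t < 0) : Integrable (fun p : A × B ↦ ρ p.1 p.2) (tiltedProd P Q ρ t) :=
  (integrable_withDensity_ofReal_iff (measurable_tiltedDensity hρ)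
    fun p ↦ (tiltedDensity_pos hρ hρ0 ht.le p).le).2 (integrable_tiltedDensity_mul hρ hρ0 hint ht)

lemma integral_tiltedProd_eq_integral_deriv_cgf [SFinite P] (hρ : Measurable (uncurry ρ))
    (hρ0 : ∀ x y, 0 ≤ ρ x y) (hint : Integrable (fun p : A × B ↦ ρ p.1 p.2) (P.prod Q))
    (ht : t < 0) : ∫ p, ρ p.1 p.2 ∂tiltedProd P Q ρ t = ∫ x, deriv (cgf (ρ x) Q) t ∂P := by
  rw [tiltedProd, integral_withDensity_ofReal (measurable_tiltedDensity hρ)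
      fun p ↦ (tiltedDensity_pos hρ hρ0 ht.le p).le,
    integral_prod _ (integrable_tiltedDensity_mul hρ hρ0 hint ht)]
  exact integral_congr_ae (ae_of_all _ (integral_tiltedDensity_mul_self hρ hρ0 ht))

lemma integrable_cgf_tiltedProd [SFinite P] (hρ : Measurable (uncurry ρ))
    (hρ0 : ∀ x y, 0 ≤ ρ x y) (hint : Integrable (fun p : A × B ↦ ρ p.1 p.2) (P.prod Q))
    (ht : t ≤ 0) : Integrable (fun p : A × B ↦ cgf (ρ p.1) Q t) (tiltedProd P Q ρ t) := by
  have h := integrable_cgf_of_integrable_prod hρ hρ0 hint ht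
  rw [← map_fst_tiltedProd (P := P) (Q := Q) hρ hρ0 ht] at h
  exact h.comp_measurable measurable_fst

lemma integral_cgf_tiltedProd [SFinite P] (hρ : Measurable (uncurry ρ))
    (hρ0 : ∀ x y, 0 ≤ ρ x y) (ht : t ≤ 0) :
    ∫ p, cgf (ρ p.1) Q t ∂tiltedProd P Q ρ t = ∫ x, cgf (ρ x) Q t ∂P := by
  conv_rhs => rw [← map_fst_tiltedProd (P := P) (Q := Q) hρ hρ0 ht]
  exact (integral_map measurable_fst.aemeasurable
    (measurable_mgf_of_measurable_uncurry (Q := Q) hρ t).log.aestronglyMeasurable).symm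

lemma integrable_llr_tiltedProd [SigmaFinite P] (hρ : Measurable (uncurry ρ))
    (hρ0 : ∀ x y, 0 ≤ ρ x y) (hint : Integrable (fun p : A × B ↦ ρ p.1 p.2) (P.prod Q))
    (ht : t < 0) : Integrable (llr (tiltedProd P Q ρ t) (P.prod Q)) (tiltedProd P Q ρ t) :=
  (((integrable_tiltedProd_of_integrable_prod hρ hρ0 hint ht).const_mul t).sub
    (integrable_cgf_tiltedProd hρ hρ0 hint ht.le)).congr (llr_tiltedProd hρ hρ0 ht.le).symm

theorem relEntropy_tiltedProd [SigmaFinite P] (hρ : Measurable (uncurry ρ))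
    (hρ0 : ∀ x y, 0 ≤ ρ x y) (hint : Integrable (fun p : A × B ↦ ρ p.1 p.2) (P.prod Q))
    (ht : t < 0) :
    relEntropy (tiltedProd P Q ρ t) (P.prod Q)
      = t * ∫ x, deriv (cgf (ρ x) Q) t ∂P - ∫ x, cgf (ρ x) Q t ∂P := by
  change ∫ p, llr _ _ p ∂_ = _
  rw [integral_congr_ae (llr_tiltedProd hρ hρ0 ht.le),
    integral_sub ((integrable_tiltedProd_of_integrable_prod hρ hρ0 hint ht).const_mul t)
      (integrable_cgf_tiltedProd hρ hρ0 hint ht.le),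
    integral_const_mul, integral_tiltedProd_eq_integral_deriv_cgf hρ hρ0 hint ht,
    integral_cgf_tiltedProd hρ hρ0 ht.le]

end TiltedProduct

lemma Real.sInf_le_of_mem_of_nonneg {s : Set ℝ} {a : ℝ} (ha : a ∈ s) (ha0 : 0 ≤ a) :
    sInf s ≤ a := by
  by_cases hs : BddBelow s
  · exact csInf_le hs ha
  · rwa [Real.sInf_of_not_bddBelow hs]

/-- The relative entropy of the tilted measure `W` w.r.t. `P × Q` equals
`λ* D − Λ(λ*)`, and hence the rate-function
`R₁(P,Q,D) = inf { H(W'‖P×Q) : W' has first marginal P, E_{W'}[ρ] ≤ D }`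
satisfies `R₁(P,Q,D) ≤ λ* D − Λ(λ*)`. -/
theorem relEntropy_tilted_eq_and_rateFunction_le
    {A B : Type*} [MeasurableSpace A] [MeasurableSpace B]
    (P : Measure A) (Q : Measure B) [IsProbabilityMeasure P] [IsProbabilityMeasure Q]
    (ρ : A → B → ℝ) (hρm : Measurable (Function.uncurry ρ)) (hρ0 : ∀ x y, 0 ≤ ρ x y)
    (hint : Integrable (fun p : A × B => ρ p.1 p.2) (P.prod Q))
    (lam D : ℝ) (hlam : lam < 0)
    (hderiv : HasDerivAt
      (fun l : ℝ => ∫ x, Real.log (∫ y, Real.exp (l * ρ x y) ∂Q) ∂P) D lam)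
    (W : Measure (A × B))
    (hW : W = (P.prod Q).withDensity (fun p =>
        ENNReal.ofReal (Real.exp (lam * ρ p.1 p.2) / ∫ y, Real.exp (lam * ρ p.1 y) ∂Q))) :
    relEntropy W (P.prod Q)
        = lam * D - ∫ x, Real.log (∫ y, Real.exp (lam * ρ x y) ∂Q) ∂P ∧
    sInf {r : ℝ | ∃ W' : Measure (A × B), IsProbabilityMeasure W' ∧
        W'.map Prod.fst = P ∧ (∫ p, ρ p.1 p.2 ∂W') ≤ D ∧ r = relEntropy W' (P.prod Q)}
      ≤ lam * D - ∫ x, Real.log (∫ y, Real.exp (lam * ρ x y) ∂Q) ∂P := by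
  have hD : ∫ x, deriv (cgf (ρ x) Q) lam ∂P = D :=
    (hasDerivAt_integral_cgf hρm hρ0 hint hlam).unique hderiv
  replace hW : W = tiltedProd P Q ρ lam := hW
  subst hW
  have hrel := relEntropy_tiltedProd hρm hρ0 hint hlam
  rw [hD] at hrel
  have hprob := isProbabilityMeasure_tiltedProd (P := P) (Q := Q) hρm hρ0 hlam.le
  refine ⟨hrel, Real.sInf_le_of_mem_of_nonneg ⟨_, hprob, map_fst_tiltedProd hρm hρ0 hlam.le,
    (integral_tiltedProd_eq_integral_deriv_cgf hρm hρ0 hint hlam).trans hD |>.le, hrel.symm⟩ ?_⟩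
  exact (relEntropy_nonneg (μ := tiltedProd P Q ρ lam) (withDensity_absolutelyContinuous _ _)
    (integrable_llr_tiltedProd hρm hρ0 hint hlam)).trans_eq hrel
end

section
/- Let Λ(λ) = E_P[log E_Q[e^{λρ(X,Y)}]] for λ < 0, with ρ ≥ 0 and E_{P×Q}[ρ] < ∞. Then Λ(λ)/λ → D_min as λ → −∞, where D_min = E_P[ess inf_{Y∼Q} ρ(X,Y)]. -/
open MeasureTheory Real Filter

section Helpers

variable {B : Type*} [MeasurableSpace B] (Q : Measure B) [IsProbabilityMeasure Q]
variable {f : B → ℝ}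

lemma aux_exp_int (hf : Measurable f) (hf0 : ∀ y, 0 ≤ f y) {lam : ℝ} (hlam : lam ≤ 0) :
    Integrable (fun y => exp (lam * f y)) Q := by
  refine (integrable_const (1:ℝ)).mono' ((hf.const_mul lam).exp.aestronglyMeasurable) ?_
  filter_upwards with y
  rw [Real.norm_eq_abs, abs_of_pos (exp_pos _)]
  exact Real.exp_le_one_iff.2 (mul_nonpos_iff.2 (Or.inr ⟨hlam, hf0 y⟩))

lemma aux_lower (hf : Measurable f) (hf0 : ∀ y, 0 ≤ f y) {lam : ℝ} (hlam : lam ≤ 0) (c : ℝ) :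
    exp (lam * c) * (Q {y | f y < c}).toReal ≤ ∫ y, exp (lam * f y) ∂Q := by
  have hs : MeasurableSet {y | f y < c} := measurableSet_lt hf measurable_const
  have hind : ∫ y, Set.indicator {y | f y < c} (fun _ => exp (lam * c)) y ∂Q
      = exp (lam * c) * (Q {y | f y < c}).toReal := by
    rw [integral_indicator_const _ hs]
    simp [mul_comm, measureReal_def]
  rw [← hind]
  refine integral_mono ((integrable_const _).indicator hs) (aux_exp_int Q hf hf0 hlam) ?_
  intro y
  by_cases h : f y < c
  · rw [Set.indicator_of_mem (show y ∈ {y | f y < c} from h)]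
    exact exp_le_exp.2 (mul_le_mul_of_nonpos_left h.le hlam)
  · rw [Set.indicator_of_notMem (show y ∉ {y | f y < c} from h)]
    positivity

lemma aux_exists_pos : ∃ c : ℝ, Q {y | f y < c} ≠ 0 := by
  by_contra h
  push_neg at h
  have hu : (⋃ n : ℕ, {y | f y < n}) = Set.univ := by
    ext y
    simp only [Set.mem_iUnion, Set.mem_setOf_eq, Set.mem_univ, iff_true]
    obtain ⟨n, hn⟩ := exists_nat_gt (f y)
    exact ⟨n, hn⟩
  have : Q Set.univ = 0 := by
    rw [← hu]
    exact measure_iUnion_null fun n => h n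
  simp [measure_univ] at this

lemma aux_int_pos (hf : Measurable f) (hf0 : ∀ y, 0 ≤ f y) {lam : ℝ} (hlam : lam ≤ 0) :
    0 < ∫ y, exp (lam * f y) ∂Q := by
  obtain ⟨c, hc⟩ := aux_exists_pos Q (f := f)
  refine lt_of_lt_of_le ?_ (aux_lower Q hf hf0 hlam c)
  exact mul_pos (exp_pos _) (ENNReal.toReal_pos hc (measure_ne_top _ _))

lemma aux_int_le_one (hf : Measurable f) (hf0 : ∀ y, 0 ≤ f y) {lam : ℝ} (hlam : lam ≤ 0) :
    ∫ y, exp (lam * f y) ∂Q ≤ 1 := by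
  calc ∫ y, exp (lam * f y) ∂Q ≤ ∫ _, (1:ℝ) ∂Q := by
        refine integral_mono (aux_exp_int Q hf hf0 hlam) (integrable_const _) fun y => ?_
        exact Real.exp_le_one_iff.2 (mul_nonpos_iff.2 (Or.inr ⟨hlam, hf0 y⟩))
    _ = 1 := by simp

lemma aux_bddAbove : BddAbove {a : ℝ | Q {y | f y < a} = 0} := by
  obtain ⟨c, hc⟩ := aux_exists_pos Q (f := f)
  refine ⟨c, fun a ha => ?_⟩
  by_contra hac
  push_neg at hac
  exact hc (measure_mono_null (fun y (hy : f y < c) => lt_trans hy hac) ha)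

lemma aux_essInf_nonneg (hf0 : ∀ y, 0 ≤ f y) : 0 ≤ essInf f Q := by
  rw [essInf_eq_sSup]
  refine le_csSup (aux_bddAbove Q) ?_
  have : {y | f y < 0} = ∅ := Set.eq_empty_iff_forall_notMem.2 fun y hy =>
    absurd hy (not_lt.2 (hf0 y))
  simp [this]

lemma aux_meas_lt_ne_zero {ε : ℝ} (hε : 0 < ε) :
    Q {y | f y < essInf f Q + ε} ≠ 0 := by
  intro h
  have : essInf f Q + ε ≤ essInf f Q := by
    conv_rhs => rw [essInf_eq_sSup]
    exact le_csSup (aux_bddAbove Q) h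
  linarith

lemma aux_upper (hf : Measurable f) (hf0 : ∀ y, 0 ≤ f y) {lam : ℝ} (hlam : lam ≤ 0) :
    ∫ y, exp (lam * f y) ∂Q ≤ exp (lam * essInf f Q) := by
  have hb : IsBoundedUnder (· ≥ ·) (ae Q) f :=
    isBoundedUnder_of ⟨0, fun y => hf0 y⟩
  have hae : ∀ᵐ y ∂Q, essInf f Q ≤ f y := ae_essInf_le hb
  calc ∫ y, exp (lam * f y) ∂Q ≤ ∫ _, exp (lam * essInf f Q) ∂Q := by
        refine integral_mono_ae (aux_exp_int Q hf hf0 hlam) (integrable_const _) ?_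
        filter_upwards [hae] with y hy
        exact exp_le_exp.2 (mul_le_mul_of_nonpos_left hy hlam)
    _ = exp (lam * essInf f Q) := by simp

end Helpers

section Key

variable {B : Type*} [MeasurableSpace B] (Q : Measure B) [IsProbabilityMeasure Q]
variable {f : B → ℝ}

lemma key_tendsto (hf : Measurable f) (hf0 : ∀ y, 0 ≤ f y) :
    Tendsto (fun lam : ℝ => Real.log (∫ y, exp (lam * f y) ∂Q) / lam) atBot
      (nhds (essInf f Q)) := by
  rw [tendsto_order]
  constructor
  · intro a ha
    filter_upwards [eventually_lt_atBot (0:ℝ)] with lam hlam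
    have h1 : ∫ y, exp (lam * f y) ∂Q ≤ exp (lam * essInf f Q) :=
      aux_upper Q hf hf0 hlam.le
    have h2 : 0 < ∫ y, exp (lam * f y) ∂Q := aux_int_pos Q hf hf0 hlam.le
    have h3 : Real.log (∫ y, exp (lam * f y) ∂Q) ≤ lam * essInf f Q := by
      calc Real.log (∫ y, exp (lam * f y) ∂Q) ≤ Real.log (exp (lam * essInf f Q)) :=
            (Real.log_le_log_iff h2 (exp_pos _)).2 h1
        _ = lam * essInf f Q := Real.log_exp _
    have h4 : essInf f Q ≤ Real.log (∫ y, exp (lam * f y) ∂Q) / lam :=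
      (le_div_iff_of_neg hlam).2 (by linarith)
    linarith
  · intro b hb
    set m := essInf f Q with hm
    set ε := (b - m) / 2 with hεdef
    have hε : 0 < ε := by simp only [hεdef]; linarith
    set c := m + ε with hc
    have hδne : Q {y | f y < c} ≠ 0 := aux_meas_lt_ne_zero Q hε
    set δ := (Q {y | f y < c}).toReal with hδdef
    have hδpos : 0 < δ := ENNReal.toReal_pos hδne (measure_ne_top _ _)
    have htends : Tendsto (fun lam : ℝ => Real.log δ / lam) atBot (nhds 0) := by
      have h := (tendsto_const_nhds (x := Real.log δ)).div_atTop
        (tendsto_neg_atBot_atTop : Tendsto (fun x : ℝ => -x) atBot atTop)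
      have : (fun lam : ℝ => Real.log δ / lam) = fun lam : ℝ => -(Real.log δ / (-lam)) := by
        funext lam; rw [div_neg, neg_neg]
      rw [this]
      simpa using h.neg
    have hev : ∀ᶠ lam : ℝ in atBot, Real.log δ / lam < ε := htends.eventually_lt_const hε
    filter_upwards [eventually_lt_atBot (0:ℝ), hev] with lam hlam hlt
    have h2 : exp (lam * c) * δ ≤ ∫ y, exp (lam * f y) ∂Q := aux_lower Q hf hf0 hlam.le c
    have hpos : 0 < exp (lam * c) * δ := mul_pos (exp_pos _) hδpos
    have hipos : 0 < ∫ y, exp (lam * f y) ∂Q := aux_int_pos Q hf hf0 hlam.le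
    have h3 : lam * c + Real.log δ ≤ Real.log (∫ y, exp (lam * f y) ∂Q) := by
      have := (Real.log_le_log_iff hpos hipos).2 h2
      rwa [Real.log_mul (exp_ne_zero _) hδpos.ne', Real.log_exp] at this
    have h4 : Real.log (∫ y, exp (lam * f y) ∂Q) / lam ≤ c + Real.log δ / lam := by
      rw [div_le_iff_of_neg hlam]
      have : (c + Real.log δ / lam) * lam = lam * c + Real.log δ := by
        rw [add_mul, div_mul_cancel₀ _ hlam.ne]
        ring
      rw [this]
      exact h3
    have hbb : c + Real.log δ / lam < m + ε + ε := by linarith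
    have : m + ε + ε = b := by rw [hεdef]; ring
    linarith

lemma key_bound (hf : Measurable f) (hf0 : ∀ y, 0 ≤ f y) (hfi : Integrable f Q)
    {lam : ℝ} (hlam : lam ≤ -1) :
    |Real.log (∫ y, exp (lam * f y) ∂Q) / lam| ≤ 2 * (∫ y, f y ∂Q) + 1 + Real.log 2 := by
  have hlam0 : lam < 0 := lt_of_le_of_lt hlam (by norm_num)
  set I := ∫ y, f y ∂Q with hI
  have hI0 : 0 ≤ I := integral_nonneg hf0
  set c := 2 * I + 1 with hc
  have hcpos : 0 < c := by simp only [hc]; linarith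
  have markov : c * (Q {y | c ≤ f y}).toReal ≤ I :=
    mul_meas_ge_le_integral_of_nonneg (ae_of_all _ hf0) hfi c
  have ht0 : 0 ≤ (Q {y | c ≤ f y}).toReal := ENNReal.toReal_nonneg
  have h1 : (Q {y | c ≤ f y}).toReal ≤ 1 / 2 := by nlinarith
  have hcompl : (1:ℝ) / 2 ≤ (Q {y | f y < c}).toReal := by
    have hset : {y | f y < c} = {y | c ≤ f y}ᶜ := by ext y; simp [not_le]
    have hms : MeasurableSet {y | c ≤ f y} := measurableSet_le measurable_const hf
    rw [hset, measure_compl hms (measure_ne_top _ _),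
      ENNReal.toReal_sub_of_le (measure_mono (Set.subset_univ _)) (measure_ne_top _ _)]
    simp only [measure_univ, ENNReal.toReal_one]
    linarith
  have h2 : exp (lam * c) * (1 / 2) ≤ ∫ y, exp (lam * f y) ∂Q :=
    le_trans (by nlinarith [exp_pos (lam * c)]) (aux_lower Q hf hf0 hlam0.le c)
  have hipos : 0 < ∫ y, exp (lam * f y) ∂Q := aux_int_pos Q hf hf0 hlam0.le
  have h3 : lam * c - Real.log 2 ≤ Real.log (∫ y, exp (lam * f y) ∂Q) := by
    have hpos : (0:ℝ) < exp (lam * c) * (1 / 2) := by positivity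
    have := (Real.log_le_log_iff hpos hipos).2 h2
    rwa [Real.log_mul (exp_ne_zero _) (by norm_num), Real.log_exp, one_div,
      Real.log_inv, ← sub_eq_add_neg] at this
  have h4 : Real.log (∫ y, exp (lam * f y) ∂Q) ≤ 0 :=
    Real.log_nonpos hipos.le (aux_int_le_one Q hf hf0 hlam0.le)
  have hnn : 0 ≤ Real.log (∫ y, exp (lam * f y) ∂Q) / lam := by
    rw [← neg_div_neg_eq]
    exact div_nonneg (neg_nonneg.2 h4) (neg_nonneg.2 hlam0.le)
  have h5 : Real.log (∫ y, exp (lam * f y) ∂Q) / lam ≤ c - Real.log 2 / lam := by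
    rw [div_le_iff_of_neg hlam0]
    have : (c - Real.log 2 / lam) * lam = lam * c - Real.log 2 := by
      rw [sub_mul, div_mul_cancel₀ _ hlam0.ne]
      ring
    rw [this]
    exact h3
  have hlog2 : 0 ≤ Real.log 2 := Real.log_nonneg one_le_two
  have h6 : -(Real.log 2 / lam) ≤ Real.log 2 := by
    have he : -(Real.log 2 / lam) = Real.log 2 / (-lam) := (div_neg _).symm
    rw [he]
    exact div_le_self hlog2 (by linarith)
  rw [abs_of_nonneg hnn]
  linarith

end Key

/-- The slope of the log-moment generating function at `−∞`:
`Λ(λ)/λ → D_min = E_P[ess inf_{Y∼Q} ρ(X,Y)]` as `λ → −∞`. -/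
theorem logMGF_div_lambda_tendsto_Dmin
    {A B : Type*} [MeasurableSpace A] [MeasurableSpace B]
    (P : Measure A) (Q : Measure B) [IsProbabilityMeasure P] [IsProbabilityMeasure Q]
    (ρ : A → B → ℝ) (hρm : Measurable (Function.uncurry ρ)) (hρ0 : ∀ x y, 0 ≤ ρ x y)
    (hint : Integrable (fun p : A × B => ρ p.1 p.2) (P.prod Q)) :
    Tendsto (fun lam : ℝ =>
        (∫ x, Real.log (∫ y, Real.exp (lam * ρ x y) ∂Q) ∂P) / lam)
      atBot (nhds (∫ x, essInf (fun y => ρ x y) Q ∂P)) := by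
  have hmx : ∀ x, Measurable (fun y => ρ x y) := fun x => hρm.of_uncurry_left
  have heq : (fun lam : ℝ => (∫ x, Real.log (∫ y, Real.exp (lam * ρ x y) ∂Q) ∂P) / lam)
      = fun lam : ℝ => ∫ x, Real.log (∫ y, Real.exp (lam * ρ x y) ∂Q) / lam ∂P := by
    funext lam
    rw [integral_div]
  rw [heq]
  have hIint : Integrable (fun x => ∫ y, ρ x y ∂Q) P := hint.integral_prod_left
  refine tendsto_integral_filter_of_dominated_convergence
    (fun x => 2 * (∫ y, ρ x y ∂Q) + 1 + Real.log 2) ?_ ?_ ?_ ?_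
  · filter_upwards with lam
    have hsm : StronglyMeasurable (fun x => ∫ y, Real.exp (lam * ρ x y) ∂Q) :=
      ((hρm.const_mul lam).exp.stronglyMeasurable).integral_prod_right'
    exact ((hsm.measurable.log).div_const lam).aestronglyMeasurable
  · filter_upwards [eventually_le_atBot (-1 : ℝ)] with lam hlam
    filter_upwards [hint.prod_right_ae] with x hx
    rw [Real.norm_eq_abs]
    exact key_bound Q (hmx x) (hρ0 x) hx hlam
  · exact ((hIint.const_mul 2).add (integrable_const 1)).add (integrable_const (Real.log 2))
  · exact ae_of_all _ fun x => key_tendsto Q (hmx x) (hρ0 x)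
end

section
/- For a stationary random field Y indexed by ℤ^d, define D_min^(n) = E_{P_n}[ess inf_{Y_{C(n)}∼Q_n} ρ_n(X_{C(n)},Y_{C(n)})], where C(n) is the cube of side n. Then the sequence n^d · D_min^(n) is nondecreasing, D_min^(nk) ≥ D_min^(k) for all n,k ≥ 1, and lim_{n→∞} D_min^(n) = sup_{n≥1} D_min^(n). -/
/-
Put `F n = ∫ ess inf_y ∑_{u ∈ C(n)} ρ (x u) (y u) dP`, so that `n ^ d * D_min^(n) = F n`.
Since `ρ ≥ 0` and the cubes increase, `F` is monotone. The cube `C(n k)` contains the `n ^ d`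
disjoint translates `C(k) + k (v - 1)`, `v ∈ C(n)`; an essential infimum of a sum dominates the
sum of the essential infima, stationarity of `Q` removes the translation inside each essential
infimum and stationarity of `P` removes it under the integral, so `F (n k) ≥ n ^ d F k`, i.e.
`D_min^(n k) ≥ D_min^(k)`. Finally, for `n = m k + r`,
`n ^ d D_min^(n) ≥ (m k) ^ d D_min^(m k) ≥ (m k) ^ d D_min^(k)`, and `m k / n → 1`; so
`liminf D_min^(n) ≥ D_min^(k)` for every `k ≥ 1`, which together with `D_min^(n) ≤ sup` gives
the limit.
-/

open MeasureTheory Filter Topology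

section EssInf

variable {α : Type*} [MeasurableSpace α] {μ : Measure α}

theorem sum_essInf_le_essInf_sum {ι : Type*} (s : Finset ι) (f : ι → α → ℝ)
    (hf : ∀ i ∈ s, IsBoundedUnder (· ≥ ·) (ae μ) (f i))
    (hs : IsCoboundedUnder (· ≥ ·) (ae μ) fun y => ∑ i ∈ s, f i y) :
    ∑ i ∈ s, essInf (f i) μ ≤ essInf (fun y => ∑ i ∈ s, f i y) μ := by
  refine le_essInf_of_ae_le _ ?_ hs
  filter_upwards [s.eventually_all.2 fun i hi => ae_essInf_le (hf i hi)] with y hy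
  exact Finset.sum_le_sum hy

theorem essInf_const_mul [NeZero μ] {f : α → ℝ} {c : ℝ} (hc : 0 ≤ c)
    (hf : IsBoundedUnder (· ≥ ·) (ae μ) f) (hf' : IsCoboundedUnder (· ≥ ·) (ae μ) f) :
    essInf (fun y => c * f y) μ = c * essInf f μ :=
  ((monotone_mul_left_of_nonneg hc).map_liminf_of_continuousAt f
    (continuous_const_mul c).continuousAt hf' hf).symm

theorem MeasureTheory.MeasurePreserving.essInf_comp {β γ : Type*} [MeasurableSpace β]
    [ConditionallyCompleteLinearOrder γ] [TopologicalSpace γ] [OrderClosedTopology γ]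
    [MeasurableSpace γ] [OpensMeasurableSpace γ] {ν : Measure β} {T : α → β}
    (hT : MeasurePreserving T μ ν) {g : β → γ} (hg : Measurable g) :
    essInf (fun x => g (T x)) μ = essInf g ν := by
  simp_rw [essInf_eq_sSup]
  congr! 3 with a
  exact hT.measure_preimage (hg measurableSet_Iio).nullMeasurableSet ▸ Iff.rfl

theorem measurable_essInf {X : Type*} [MeasurableSpace X] [SFinite μ] {F : X → α → ℝ}
    (hF : Measurable (Function.uncurry F)) (hb : ∀ x, IsBoundedUnder (· ≥ ·) (ae μ) (F x))
    (hc : ∀ x, IsCoboundedUnder (· ≥ ·) (ae μ) (F x)) :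
    Measurable fun x => essInf (F x) μ := by
  refine measurable_of_Ioi fun c => ?_
  have hpre : (fun x => essInf (F x) μ) ⁻¹' Set.Ioi c =
      ⋃ (q : ℚ) (_ : c < q), {x | μ {y | F x y < q} = 0} := by
    ext x
    simp only [Set.mem_preimage, Set.mem_Ioi, Set.mem_iUnion, Set.mem_ofPred_eq, exists_prop]
    constructor
    · intro hx
      obtain ⟨q, hcq, hq⟩ := exists_rat_btwn hx
      refine ⟨q, hcq, measure_mono_null ?_ (ae_lt_of_lt_essInf hq (hb x))⟩
      exact fun y (hy : F x y < q) (h : (q : ℝ) < F x y) => lt_asymm h hy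
    · rintro ⟨q, hcq, hq⟩
      refine hcq.trans_le (le_essInf_of_ae_le _ ?_ (hc x))
      exact measure_mono_null (fun y (hy : ¬ (q : ℝ) ≤ F x y) => not_le.1 hy) hq
  rw [hpre]
  refine .iUnion fun q => .iUnion fun _ => ?_
  exact measurable_measure_prodMk_left (measurableSet_lt hF measurable_const)
    (measurableSet_singleton 0)

theorem le_essInf_of_forall_le [NeZero μ] {f : α → ℝ} {a b : ℝ} (ha : ∀ y, a ≤ f y)
    (hb : ∀ y, f y ≤ b) : a ≤ essInf f μ :=
  le_essInf_of_ae_le a (.of_forall ha) (isCoboundedUnder_ge_of_le _ hb)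

theorem essInf_le_of_forall_le [NeZero μ] {f : α → ℝ} {a b : ℝ} (ha : ∀ y, a ≤ f y)
    (hb : ∀ y, f y ≤ b) : essInf f μ ≤ b :=
  have ⟨y, hy⟩ := (ae_essInf_le (μ := μ) (isBoundedUnder_of ⟨a, ha⟩)).exists
  hy.trans (hb y)

end EssInf

theorem MeasureTheory.MeasurePreserving.integral_comp_of_aestronglyMeasurable {α β E : Type*}
    [MeasurableSpace α] [MeasurableSpace β] [NormedAddCommGroup E] [NormedSpace ℝ E]
    {μ : Measure α} {ν : Measure β} {T : α → β} (hT : MeasurePreserving T μ ν) {g : β → E}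
    (hg : AEStronglyMeasurable g ν) : ∫ x, g (T x) ∂μ = ∫ y, g y ∂ν := by
  rw [← hT.map_eq] at hg ⊢
  exact (integral_map hT.aemeasurable hg).symm

section Sequence

variable {a : ℕ → ℝ} {d : ℕ}

theorem tendsto_div_mul_div_self {k : ℕ} (hk : 0 < k) :
    Tendsto (fun n : ℕ => ((n / k * k : ℕ) : ℝ) / n) atTop (𝓝 1) := by
  have hlow : Tendsto (fun n : ℕ => 1 - (k : ℝ) / n) atTop (𝓝 1) := by
    simpa using tendsto_const_nhds.sub (tendsto_const_div_atTop_nhds_zero_nat (k : ℝ))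
  refine tendsto_of_tendsto_of_tendsto_of_le_of_le' hlow tendsto_const_nhds ?_ ?_
  · filter_upwards [eventually_gt_atTop 0] with n hn
    have hn' : (0 : ℝ) < n := by exact_mod_cast hn
    have : (n : ℝ) < (n / k * k : ℕ) + k := by exact_mod_cast Nat.lt_div_mul_add hk
    rw [one_sub_div hn'.ne', div_le_div_iff_of_pos_right hn']
    linarith
  · filter_upwards with n
    exact div_le_one_of_le₀ (by exact_mod_cast Nat.div_mul_le_self n k) n.cast_nonneg

theorem div_mul_div_self_pow_mul_le (hmono : Monotone fun n : ℕ => (n : ℝ) ^ d * a n)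
    (hmul : ∀ m k : ℕ, 1 ≤ m → 1 ≤ k → a k ≤ a (m * k)) {k n : ℕ} (hk : 1 ≤ k) (hkn : k ≤ n) :
    (((n / k * k : ℕ) : ℝ) / n) ^ d * a k ≤ a n := by
  have hn : (0 : ℝ) < (n : ℝ) ^ d := pow_pos (by exact_mod_cast hk.trans hkn) d
  have hblock : ((n / k * k : ℕ) : ℝ) ^ d * a k ≤ (n : ℝ) ^ d * a n :=
    calc ((n / k * k : ℕ) : ℝ) ^ d * a k
        ≤ ((n / k * k : ℕ) : ℝ) ^ d * a (n / k * k) :=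
          mul_le_mul_of_nonneg_left (hmul _ _ ((Nat.one_le_div_iff hk).2 hkn) hk)
            (by positivity)
      _ ≤ (n : ℝ) ^ d * a n := hmono (Nat.div_mul_le_self n k)
  rw [div_pow, div_mul_eq_mul_div, div_le_iff₀ hn]
  linarith

theorem tendsto_ciSup_of_monotone_pow_mul (hbdd : BddAbove (Set.range a))
    (hmono : Monotone fun n : ℕ => (n : ℝ) ^ d * a n)
    (hmul : ∀ m k : ℕ, 1 ≤ m → 1 ≤ k → a k ≤ a (m * k)) (h01 : a 0 ≤ a 1) :
    Tendsto a atTop (𝓝 (⨆ n, a n)) := by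
  rw [tendsto_order]
  refine ⟨fun b hb => ?_, fun b hb => .of_forall fun n => (le_ciSup hbdd n).trans_lt hb⟩
  obtain ⟨k, hk, hbk⟩ : ∃ k, 1 ≤ k ∧ b < a k := by
    obtain ⟨k, hk⟩ := exists_lt_of_lt_ciSup hb
    rcases k.eq_zero_or_pos with rfl | hk0
    · exact ⟨1, le_rfl, hk.trans_le h01⟩
    · exact ⟨k, hk0, hk⟩
  have hlim : Tendsto (fun n : ℕ => (((n / k * k : ℕ) : ℝ) / n) ^ d * a k) atTop (𝓝 (a k)) := by
    simpa using ((tendsto_div_mul_div_self hk).pow d).mul_const (a k)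
  filter_upwards [hlim.eventually_const_lt hbk, eventually_ge_atTop k] with n hn hkn
  exact hn.trans_le (div_mul_div_self_pow_mul_le hmono hmul hk hkn)

theorem monotone_pow_mul_and_tendsto_ciSup {C : ℝ} {F : ℕ → ℝ}
    (ha : ∀ n, a n = ((n : ℝ) ^ d)⁻¹ * F n) (hF0 : ∀ n, 0 ≤ F n)
    (hFC : ∀ n, F n ≤ (n : ℝ) ^ d * C) (hFmono : Monotone F)
    (hFmul : ∀ n k : ℕ, (n : ℝ) ^ d * F k ≤ F (n * k)) :
    Monotone (fun n : ℕ => (n : ℝ) ^ d * a n) ∧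
    (∀ n k : ℕ, 1 ≤ n → 1 ≤ k → a k ≤ a (n * k)) ∧
    Tendsto a atTop (𝓝 (⨆ n, a n)) := by
  have hpow : ∀ n : ℕ, (n : ℝ) ^ d * a n = F n := by
    intro n
    rcases eq_or_ne ((n : ℝ) ^ d) 0 with h | h
    · have hFn : F n ≤ 0 := by simpa [h] using hFC n
      rw [h, zero_mul, hFn.antisymm (hF0 n)]
    · rw [ha, mul_inv_cancel_left₀ h]
  have hmono : Monotone fun n : ℕ => (n : ℝ) ^ d * a n := by
    simpa only [hpow] using hFmono
  have hmul : ∀ n k : ℕ, 1 ≤ n → 1 ≤ k → a k ≤ a (n * k) := by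
    intro n k hn hk
    have hpos : (0 : ℝ) < (n : ℝ) ^ d * (k : ℝ) ^ d := by
      have : (0 : ℝ) < n ∧ (0 : ℝ) < k := ⟨by exact_mod_cast hn, by exact_mod_cast hk⟩
      positivity
    refine le_of_mul_le_mul_left ?_ hpos
    calc (n : ℝ) ^ d * (k : ℝ) ^ d * a k = (n : ℝ) ^ d * F k := by rw [mul_assoc, hpow]
      _ ≤ F (n * k) := hFmul n k
      _ = (n : ℝ) ^ d * (k : ℝ) ^ d * a (n * k) := by rw [← hpow]; push_cast; ring
  -- `0 ^ d` is `0` or `1`, and `(0 ^ d)⁻¹ = 0 ^ d` in both cases.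
  have h01 : a 0 ≤ a 1 := by
    rw [ha, ha, Nat.cast_zero, Nat.cast_one, one_pow, inv_one, one_mul, ← inv_pow, inv_zero]
    exact (mul_le_of_le_one_left (hF0 0) (pow_le_one₀ le_rfl zero_le_one)).trans
      (hFmono zero_le_one)
  have hle : ∀ n, 1 ≤ n → a n ≤ C := fun n hn => by
    refine le_of_mul_le_mul_left ?_ (pow_pos (by exact_mod_cast hn) d : (0 : ℝ) < (n : ℝ) ^ d)
    rw [hpow]
    exact hFC n
  have hbdd : BddAbove (Set.range a) := by
    refine ⟨C, Set.forall_mem_range.2 fun n => ?_⟩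
    rcases n.eq_zero_or_pos with rfl | hn
    · exact h01.trans (hle 1 le_rfl)
    · exact hle n hn
  exact ⟨hmono, hmul, tendsto_ciSup_of_monotone_pow_mul hbdd hmono hmul h01⟩

end Sequence

section Cube

variable {d : ℕ}

noncomputable def cube (d n : ℕ) : Finset (Fin d → ℤ) :=
  Finset.Icc (fun _ => 1) (fun _ => (n : ℤ))

theorem card_cube (d n : ℕ) : (cube d n).card = n ^ d := by
  simp [cube, Pi.card_Icc, Int.card_Icc]

theorem cube_subset_cube {n m : ℕ} (h : n ≤ m) : cube d n ⊆ cube d m :=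
  Finset.Icc_subset_Icc le_rfl fun _ => by simpa using h

theorem Int.eq_of_add_mul_eq_add_mul {r r' v v' k : ℤ} (hr : r ∈ Set.Icc 1 k)
    (hr' : r' ∈ Set.Icc 1 k) (h : r + k * v = r' + k * v') : v = v' := by
  obtain ⟨hr1, hrk⟩ := hr
  obtain ⟨hr1', hrk'⟩ := hr'
  rcases lt_trichotomy v v' with hlt | rfl | hgt
  · nlinarith
  · rfl
  · nlinarith

theorem sum_sum_cube_translate_le {g : (Fin d → ℤ) → ℝ} (hg : ∀ u, 0 ≤ g u) (n k : ℕ) :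
    ∑ v ∈ cube d n, ∑ r ∈ cube d k, g (r + (k : ℤ) • (v - 1)) ≤ ∑ u ∈ cube d (n * k), g u := by
  have hmem : ∀ {u : Fin d → ℤ} {m : ℕ}, u ∈ cube d m ↔ ∀ i, u i ∈ Set.Icc 1 (m : ℤ) := by
    simp [cube, Finset.mem_Icc, Pi.le_def, forall_and]
  have hinj : Set.InjOn (fun p : (Fin d → ℤ) × (Fin d → ℤ) => p.2 + (k : ℤ) • (p.1 - 1))
      ↑(cube d n ×ˢ cube d k) := by
    rintro ⟨v, r⟩ hp ⟨v', r'⟩ hp' h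
    simp only [Finset.coe_product, Set.mem_prod, Finset.mem_coe] at hp hp'
    have hv : v = v' := funext fun i => by
      simpa using Int.eq_of_add_mul_eq_add_mul (hmem.1 hp.2 i) (hmem.1 hp'.2 i) (congrFun h i)
    subst hv
    simpa using h
  have hmaps : (cube d n ×ˢ cube d k).image
      (fun p : (Fin d → ℤ) × (Fin d → ℤ) => p.2 + (k : ℤ) • (p.1 - 1)) ⊆ cube d (n * k) := by
    intro u hu
    obtain ⟨⟨v, r⟩, hp, rfl⟩ := Finset.mem_image.1 hu
    rw [Finset.mem_product] at hp
    refine hmem.2 fun i => ?_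
    obtain ⟨hv1, hvn⟩ := hmem.1 hp.1 i
    obtain ⟨hr1, hrk⟩ := hmem.1 hp.2 i
    simp only [Pi.add_apply, Pi.smul_apply, Pi.sub_apply, Pi.one_apply, smul_eq_mul]
    push_cast
    constructor <;> nlinarith
  rw [← Finset.sum_product']
  calc _ = ∑ u ∈ (cube d n ×ˢ cube d k).image
          (fun p : (Fin d → ℤ) × (Fin d → ℤ) => p.2 + (k : ℤ) • (p.1 - 1)), g u :=
        (Finset.sum_image hinj).symm
    _ ≤ _ := Finset.sum_le_sum_of_subset_of_nonneg hmaps fun u _ _ => hg u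

end Cube

section Distortion

variable {A B : Type*} {d : ℕ} {ρ : A → B → ℝ} {C : ℝ}

noncomputable def cubeDistortion (ρ : A → B → ℝ) (n : ℕ) (x : (Fin d → ℤ) → A)
    (y : (Fin d → ℤ) → B) : ℝ :=
  ∑ u ∈ cube d n, ρ (x u) (y u)

theorem cubeDistortion_nonneg (hρ0 : ∀ a b, 0 ≤ ρ a b) (n : ℕ) (x : (Fin d → ℤ) → A)
    (y : (Fin d → ℤ) → B) : 0 ≤ cubeDistortion ρ n x y :=
  Finset.sum_nonneg fun _ _ => hρ0 _ _

theorem cubeDistortion_le (hρC : ∀ a b, ρ a b ≤ C) (n : ℕ) (x : (Fin d → ℤ) → A)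
    (y : (Fin d → ℤ) → B) : cubeDistortion ρ n x y ≤ (n : ℝ) ^ d * C := by
  simpa [cubeDistortion, card_cube] using
    Finset.sum_le_card_nsmul (cube d n) _ C fun _ _ => hρC (x _) (y _)

theorem cubeDistortion_mono (hρ0 : ∀ a b, 0 ≤ ρ a b) {n m : ℕ} (h : n ≤ m)
    (x : (Fin d → ℤ) → A) (y : (Fin d → ℤ) → B) :
    cubeDistortion ρ n x y ≤ cubeDistortion ρ m x y :=
  Finset.sum_le_sum_of_subset_of_nonneg (cube_subset_cube h) fun _ _ _ => hρ0 _ _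

variable [MeasurableSpace B]

theorem measurable_cubeDistortion_apply (hρ : ∀ a, Measurable (ρ a)) (n : ℕ)
    (x : (Fin d → ℤ) → A) : Measurable (cubeDistortion ρ n x) :=
  Finset.measurable_sum _ fun u _ => (hρ (x u)).comp (measurable_pi_apply u)

theorem measurable_cubeDistortion [MeasurableSpace A] (hρ : Measurable (Function.uncurry ρ))
    (n : ℕ) :
    Measurable (Function.uncurry (cubeDistortion (d := d) ρ n)) :=
  Finset.measurable_sum _ fun u _ => hρ.comp (by fun_prop : Measurable fun p :
    ((Fin d → ℤ) → A) × ((Fin d → ℤ) → B) => (p.1 u, p.2 u))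

variable (Q : Measure ((Fin d → ℤ) → B))

noncomputable def minCubeDistortion (ρ : A → B → ℝ) (n : ℕ) (x : (Fin d → ℤ) → A) : ℝ :=
  essInf (cubeDistortion ρ n x) Q

variable [IsProbabilityMeasure Q]

theorem minCubeDistortion_nonneg (hρ0 : ∀ a b, 0 ≤ ρ a b) (hρC : ∀ a b, ρ a b ≤ C) (n : ℕ)
    (x : (Fin d → ℤ) → A) : 0 ≤ minCubeDistortion Q ρ n x :=
  le_essInf_of_forall_le (cubeDistortion_nonneg hρ0 n x) (cubeDistortion_le hρC n x)

theorem minCubeDistortion_le (hρ0 : ∀ a b, 0 ≤ ρ a b) (hρC : ∀ a b, ρ a b ≤ C) (n : ℕ)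
    (x : (Fin d → ℤ) → A) : minCubeDistortion Q ρ n x ≤ (n : ℝ) ^ d * C :=
  essInf_le_of_forall_le (cubeDistortion_nonneg hρ0 n x) (cubeDistortion_le hρC n x)

theorem minCubeDistortion_mono (hρ0 : ∀ a b, 0 ≤ ρ a b) (hρC : ∀ a b, ρ a b ≤ C) {n m : ℕ}
    (h : n ≤ m) (x : (Fin d → ℤ) → A) :
    minCubeDistortion Q ρ n x ≤ minCubeDistortion Q ρ m x :=
  essInf_mono_ae (.of_forall (cubeDistortion_mono hρ0 h x))
    (isBoundedUnder_of ⟨0, cubeDistortion_nonneg hρ0 n x⟩)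
    (isCoboundedUnder_ge_of_le _ (cubeDistortion_le hρC m x))

theorem measurable_minCubeDistortion [MeasurableSpace A]
    (hρ : Measurable (Function.uncurry ρ)) (hρ0 : ∀ a b, 0 ≤ ρ a b) (hρC : ∀ a b, ρ a b ≤ C)
    (n : ℕ) : Measurable (minCubeDistortion (d := d) Q ρ n) :=
  measurable_essInf (measurable_cubeDistortion hρ n)
    (fun x => isBoundedUnder_of ⟨0, cubeDistortion_nonneg hρ0 n x⟩)
    (fun x => isCoboundedUnder_ge_of_le _ (cubeDistortion_le hρC n x))

theorem essInf_inv_pow_mul_cubeDistortion (hρ0 : ∀ a b, 0 ≤ ρ a b) (hρC : ∀ a b, ρ a b ≤ C)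
    (n : ℕ) (x : (Fin d → ℤ) → A) :
    essInf (fun y => ((n : ℝ) ^ d)⁻¹ * cubeDistortion ρ n x y) Q =
      ((n : ℝ) ^ d)⁻¹ * minCubeDistortion Q ρ n x :=
  essInf_const_mul (by positivity) (isBoundedUnder_of ⟨0, cubeDistortion_nonneg hρ0 n x⟩)
    (isCoboundedUnder_ge_of_le _ (cubeDistortion_le hρC n x))

theorem sum_minCubeDistortion_translate_le
    (hQ : ∀ v, MeasurePreserving (fun (y : (Fin d → ℤ) → B) u => y (u + v)) Q Q)
    (hρ : ∀ a, Measurable (ρ a)) (hρ0 : ∀ a b, 0 ≤ ρ a b) (hρC : ∀ a b, ρ a b ≤ C)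
    (n k : ℕ) (x : (Fin d → ℤ) → A) :
    ∑ v ∈ cube d n, minCubeDistortion Q ρ k (fun u => x (u + (k : ℤ) • (v - 1))) ≤
      minCubeDistortion Q ρ (n * k) x := by
  set w : (Fin d → ℤ) → Fin d → ℤ := fun v => (k : ℤ) • (v - 1)
  calc ∑ v ∈ cube d n, minCubeDistortion Q ρ k (fun u => x (u + w v))
      = ∑ v ∈ cube d n, essInf (fun y => cubeDistortion ρ k (fun u => x (u + w v))
          (fun u => y (u + w v))) Q :=
        Finset.sum_congr rfl fun v _ => by
          have := (hQ (w v)).essInf_comp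
            (measurable_cubeDistortion_apply hρ k fun u => x (u + w v))
          exact this.symm
    _ ≤ essInf (fun y => ∑ v ∈ cube d n, cubeDistortion ρ k (fun u => x (u + w v))
          (fun u => y (u + w v))) Q := by
        refine sum_essInf_le_essInf_sum _ _
          (fun v _ => isBoundedUnder_of ⟨0, fun y => cubeDistortion_nonneg hρ0 k _ _⟩) ?_
        refine isCoboundedUnder_ge_of_le _ (x := (n : ℝ) ^ d * ((k : ℝ) ^ d * C)) fun y => ?_
        simpa [card_cube] using Finset.sum_le_card_nsmul (cube d n) _ _
          fun v _ => cubeDistortion_le hρC k (fun u => x (u + w v)) (fun u => y (u + w v))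
    _ ≤ minCubeDistortion Q ρ (n * k) x :=
        essInf_mono_ae (.of_forall fun y =>
            sum_sum_cube_translate_le (fun u => hρ0 (x u) (y u)) n k)
          (isBoundedUnder_of ⟨0, fun y => Finset.sum_nonneg fun v _ =>
            cubeDistortion_nonneg hρ0 k _ _⟩)
          (isCoboundedUnder_ge_of_le _ (cubeDistortion_le hρC (n * k) x))

end Distortion

section Integral

variable {A B : Type*} [MeasurableSpace A] [MeasurableSpace B] {d : ℕ} {ρ : A → B → ℝ} {C : ℝ}
  (P : Measure ((Fin d → ℤ) → A)) (Q : Measure ((Fin d → ℤ) → B))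
  [IsProbabilityMeasure P] [IsProbabilityMeasure Q]

theorem integrable_minCubeDistortion (hρ : Measurable (Function.uncurry ρ))
    (hρ0 : ∀ a b, 0 ≤ ρ a b) (hρC : ∀ a b, ρ a b ≤ C) (n : ℕ) :
    Integrable (minCubeDistortion Q ρ n) P :=
  .of_bound (measurable_minCubeDistortion Q hρ hρ0 hρC n).aestronglyMeasurable _
    (.of_forall fun x => by
      rw [Real.norm_of_nonneg (minCubeDistortion_nonneg Q hρ0 hρC n x)]
      exact minCubeDistortion_le Q hρ0 hρC n x)

theorem integral_minCubeDistortion_le (hρ : Measurable (Function.uncurry ρ))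
    (hρ0 : ∀ a b, 0 ≤ ρ a b) (hρC : ∀ a b, ρ a b ≤ C) (n : ℕ) :
    ∫ x, minCubeDistortion Q ρ n x ∂P ≤ (n : ℝ) ^ d * C := by
  simpa using integral_mono (integrable_minCubeDistortion P Q hρ hρ0 hρC n)
    (integrable_const ((n : ℝ) ^ d * C)) (minCubeDistortion_le Q hρ0 hρC n)

theorem monotone_integral_minCubeDistortion (hρ : Measurable (Function.uncurry ρ))
    (hρ0 : ∀ a b, 0 ≤ ρ a b) (hρC : ∀ a b, ρ a b ≤ C) :
    Monotone fun n => ∫ x, minCubeDistortion Q ρ n x ∂P := fun _ _ h =>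
  integral_mono (integrable_minCubeDistortion P Q hρ hρ0 hρC _)
    (integrable_minCubeDistortion P Q hρ hρ0 hρC _) (minCubeDistortion_mono Q hρ0 hρC h)

theorem pow_mul_integral_minCubeDistortion_le
    (hP : ∀ v, MeasurePreserving (fun (x : (Fin d → ℤ) → A) u => x (u + v)) P P)
    (hQ : ∀ v, MeasurePreserving (fun (y : (Fin d → ℤ) → B) u => y (u + v)) Q Q)
    (hρ : Measurable (Function.uncurry ρ)) (hρ0 : ∀ a b, 0 ≤ ρ a b) (hρC : ∀ a b, ρ a b ≤ C)
    (n k : ℕ) :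
    (n : ℝ) ^ d * ∫ x, minCubeDistortion Q ρ k x ∂P ≤
      ∫ x, minCubeDistortion Q ρ (n * k) x ∂P := by
  have hint := integrable_minCubeDistortion P Q hρ hρ0 hρC
  set w : (Fin d → ℤ) → Fin d → ℤ := fun v => (k : ℤ) • (v - 1)
  calc (n : ℝ) ^ d * ∫ x, minCubeDistortion Q ρ k x ∂P
      = ∑ v ∈ cube d n, ∫ x, minCubeDistortion Q ρ k (fun u => x (u + w v)) ∂P := by
        rw [Finset.sum_congr rfl fun v _ =>
          (hP (w v)).integral_comp_of_aestronglyMeasurable (hint k).aestronglyMeasurable,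
          Finset.sum_const, card_cube, nsmul_eq_mul, Nat.cast_pow]
    _ = ∫ x, ∑ v ∈ cube d n, minCubeDistortion Q ρ k (fun u => x (u + w v)) ∂P :=
        (integral_finsetSum _ fun v _ =>
          (hP (w v)).integrable_comp_of_integrable (hint k)).symm
    _ ≤ ∫ x, minCubeDistortion Q ρ (n * k) x ∂P :=
        integral_mono (integrable_finsetSum _ fun v _ =>
            (hP (w v)).integrable_comp_of_integrable (hint k)) (hint (n * k))
          (sum_minCubeDistortion_translate_le Q hQ (fun _ => hρ.of_uncurry_left) hρ0 hρC n k)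

end Integral

theorem integral_essInf_inv_pow_mul_cubeDistortion {A B : Type*} [MeasurableSpace A]
    [MeasurableSpace B] {d : ℕ} {ρ : A → B → ℝ} {C : ℝ} (P : Measure ((Fin d → ℤ) → A))
    (Q : Measure ((Fin d → ℤ) → B)) [IsProbabilityMeasure Q] (hρ0 : ∀ a b, 0 ≤ ρ a b)
    (hρC : ∀ a b, ρ a b ≤ C) (n : ℕ) :
    ∫ x, essInf (fun y => ((n : ℝ) ^ d)⁻¹ * cubeDistortion ρ n x y) Q ∂P =
      ((n : ℝ) ^ d)⁻¹ * ∫ x, minCubeDistortion Q ρ n x ∂P := by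
  simp_rw [essInf_inv_pow_mul_cubeDistortion Q hρ0 hρC]
  exact integral_const_mul _ _

theorem field_nDmin_monotone_and_tendsto_sup_general
    {A B : Type*} [MeasurableSpace A] [MeasurableSpace B] (d : ℕ)
    (Pfield : Measure ((Fin d → ℤ) → A)) (Qfield : Measure ((Fin d → ℤ) → B))
    [IsProbabilityMeasure Pfield] [IsProbabilityMeasure Qfield]
    (hPstat : ∀ v : Fin d → ℤ,
      MeasurePreserving (fun x : (Fin d → ℤ) → A => fun u => x (u + v)) Pfield Pfield)
    (hQstat : ∀ v : Fin d → ℤ,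
      MeasurePreserving (fun y : (Fin d → ℤ) → B => fun u => y (u + v)) Qfield Qfield)
    (ρ : A → B → ℝ) (hρm : Measurable (Function.uncurry ρ)) (hρ0 : ∀ x y, 0 ≤ ρ x y)
    (C : ℝ) (hρC : ∀ x y, ρ x y ≤ C)
    (dmin : ℕ → ℝ)
    (hdmin : ∀ n : ℕ, dmin n = ∫ x, essInf (fun y : (Fin d → ℤ) → B =>
        ((n : ℝ) ^ d)⁻¹ * ∑ u ∈ Finset.Icc (fun _ => (1 : ℤ)) (fun _ => (n : ℤ)),
          ρ (x u) (y u)) Qfield ∂Pfield) :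
    Monotone (fun n : ℕ => (n : ℝ) ^ d * dmin n) ∧
    (∀ n k : ℕ, 1 ≤ n → 1 ≤ k → dmin k ≤ dmin (n * k)) ∧
    Tendsto dmin atTop (nhds (⨆ n : ℕ, dmin n)) :=
  monotone_pow_mul_and_tendsto_ciSup
    (fun n => (hdmin n).trans
      (integral_essInf_inv_pow_mul_cubeDistortion Pfield Qfield hρ0 hρC n))
    (fun n => integral_nonneg (minCubeDistortion_nonneg Qfield hρ0 hρC n))
    (integral_minCubeDistortion_le Pfield Qfield hρm hρ0 hρC)
    (monotone_integral_minCubeDistortion Pfield Qfield hρm hρ0 hρC)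
    (pow_mul_integral_minCubeDistortion_le Pfield Qfield hPstat hQstat hρm hρ0 hρC)

/-- Random-field version: for stationary random fields on `ℤ^d` and bounded
nonnegative distortion, with `D_min^(n) = E_{P_n}[ess inf ρ_n]` over the cube
`C(n) = [1,n]^d`, the sequence `n^d · D_min^(n)` is nondecreasing,
`D_min^(nk) ≥ D_min^(k)` for `n, k ≥ 1`, and `D_min^(n) → sup_n D_min^(n)`. -/
theorem field_nDmin_monotone_and_tendsto_sup
    {A B : Type*} [MeasurableSpace A] [MeasurableSpace B] (d : ℕ) (hd : 1 ≤ d)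
    (Pfield : Measure ((Fin d → ℤ) → A)) (Qfield : Measure ((Fin d → ℤ) → B))
    [IsProbabilityMeasure Pfield] [IsProbabilityMeasure Qfield]
    (hPstat : ∀ v : Fin d → ℤ,
      MeasurePreserving (fun x : (Fin d → ℤ) → A => fun u => x (u + v)) Pfield Pfield)
    (hQstat : ∀ v : Fin d → ℤ,
      MeasurePreserving (fun y : (Fin d → ℤ) → B => fun u => y (u + v)) Qfield Qfield)
    (ρ : A → B → ℝ) (hρm : Measurable (Function.uncurry ρ)) (hρ0 : ∀ x y, 0 ≤ ρ x y)
    (C : ℝ) (hρC : ∀ x y, ρ x y ≤ C)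
    (dmin : ℕ → ℝ)
    (hdmin : ∀ n : ℕ, dmin n = ∫ x, essInf (fun y : (Fin d → ℤ) → B =>
        ((n : ℝ) ^ d)⁻¹ * ∑ u ∈ Finset.Icc (fun _ => (1 : ℤ)) (fun _ => (n : ℤ)),
          ρ (x u) (y u)) Qfield ∂Pfield) :
    Monotone (fun n : ℕ => (n : ℝ) ^ d * dmin n) ∧
    (∀ n k : ℕ, 1 ≤ n → 1 ≤ k → dmin k ≤ dmin (n * k)) ∧
    Tendsto dmin atTop (nhds (⨆ n : ℕ, dmin n)) :=
  field_nDmin_monotone_and_tendsto_sup_general d Pfield Qfield hPstat hQstat ρ hρm hρ0 C hρC dmin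
    hdmin
end

section
/- Let X be a stationary ergodic random field on ℤ^d, Y a stationary random field independent of X, and suppose Q_n(B(X_{C(n)},D)) > 0 eventually with probability one. For the waiting time W_n = inf { i ≥ 1 : ρ_n(X_{C(n)}, Y_{u+C(n)}) ≤ D for some u ∈ [0,i−1]^d }, and any ε > 0, the lower bound log[W_n^d · Q_n(B(X_{C(n)},D))] ≥ −(1+ε) log n holds eventually almost surely. -/
open MeasureTheory Real Filter

/-- Lower-bound half of Theorem 28: for a stationary ergodic random field `X` and
an independent stationary field `Y` with `Q_n(B(X_{C(n)},D)) > 0` eventually a.s.,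
the waiting time `W_n` for a `D`-close match of the pattern `X_{C(n)}` in `Y`
satisfies `log[W_n^d · Q_n(B(X_{C(n)},D))] ≥ −(1+ε) log n` eventually a.s. -/
theorem field_waiting_time_lower_bound
    {A B : Type*} [MeasurableSpace A] [MeasurableSpace B] (d : ℕ) (hd : 1 ≤ d)
    (Pfield : Measure ((Fin d → ℤ) → A)) (Qfield : Measure ((Fin d → ℤ) → B))
    [IsProbabilityMeasure Pfield] [IsProbabilityMeasure Qfield]
    (hPstat : ∀ v : Fin d → ℤ,
      MeasurePreserving (fun x : (Fin d → ℤ) → A => fun u => x (u + v)) Pfield Pfield)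
    (hQstat : ∀ v : Fin d → ℤ,
      MeasurePreserving (fun y : (Fin d → ℤ) → B => fun u => y (u + v)) Qfield Qfield)
    (hPerg : ∀ s : Set ((Fin d → ℤ) → A), MeasurableSet s →
      (∀ v : Fin d → ℤ, (fun x : (Fin d → ℤ) → A => fun u => x (u + v)) ⁻¹' s = s) →
      Pfield s = 0 ∨ Pfield s = 1)
    (ρ : A → B → ℝ) (hρm : Measurable (Function.uncurry ρ)) (hρ0 : ∀ x y, 0 ≤ ρ x y)
    (D : ℝ)
    (q : ((Fin d → ℤ) → A) → ℕ → ENNReal)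
    (hq : ∀ x n, q x n = Qfield {y |
      ((n : ℝ) ^ d)⁻¹ * ∑ u ∈ Finset.Icc (fun _ => (1 : ℤ)) (fun _ => (n : ℤ)),
        ρ (x u) (y u) ≤ D})
    (hpos : ∀ᵐ x ∂Pfield, ∀ᶠ n : ℕ in atTop, 0 < q x n)
    (W : ℕ → ((Fin d → ℤ) → A) × ((Fin d → ℤ) → B) → ℕ)
    (hW : ∀ n xy, W n xy = sInf {i : ℕ | 1 ≤ i ∧ ∃ v : Fin d → ℤ,
      (∀ j, 0 ≤ v j ∧ v j ≤ (i : ℤ) - 1) ∧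
      ((n : ℝ) ^ d)⁻¹ * ∑ u ∈ Finset.Icc (fun _ => (1 : ℤ)) (fun _ => (n : ℤ)),
        ρ (xy.1 u) (xy.2 (v + u)) ≤ D}) :
    ∀ ε : ℝ, 0 < ε → ∀ᵐ xy ∂(Pfield.prod Qfield), ∀ᶠ n : ℕ in atTop,
      -(1 + ε) * Real.log n ≤ Real.log (((W n xy : ℝ)) ^ d * (q xy.1 n).toReal) := by
  intro ε hε
  classical
  -- notation
  set t : ℕ → ℝ := fun n => (n : ℝ) ^ (-(1 + ε)) with ht
  have ht0 : ∀ n : ℕ, 0 ≤ t n := fun n => Real.rpow_nonneg (Nat.cast_nonneg n) _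
  -- the cube and the distortion function
  set cube : ℕ → Finset (Fin d → ℤ) :=
    fun n => Finset.Icc (fun _ => (1 : ℤ)) (fun _ => (n : ℤ)) with hcube
  set g : ℕ → (Fin d → ℤ) → ((Fin d → ℤ) → A) × ((Fin d → ℤ) → B) → ℝ :=
    fun n v xy => ((n : ℝ) ^ d)⁻¹ * ∑ u ∈ cube n, ρ (xy.1 u) (xy.2 (v + u)) with hgdef
  have hg : ∀ (n : ℕ) (v : Fin d → ℤ), Measurable (g n v) := by
    intro n v
    apply Measurable.const_mul
    apply Finset.measurable_sum
    intro u _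
    have h1 : Measurable fun xy : ((Fin d → ℤ) → A) × ((Fin d → ℤ) → B) =>
        (xy.1 u, xy.2 (v + u)) :=
      ((measurable_pi_apply u).comp measurable_fst).prodMk
        ((measurable_pi_apply (v + u)).comp measurable_snd)
    exact hρm.comp h1
  -- measurability of x ↦ q x n
  have hS0 : ∀ n : ℕ, MeasurableSet {p : ((Fin d → ℤ) → A) × ((Fin d → ℤ) → B) |
      ((n : ℝ) ^ d)⁻¹ * ∑ u ∈ cube n, ρ (p.1 u) (p.2 u) ≤ D} := by
    intro n
    apply measurableSet_le _ measurable_const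
    apply Measurable.const_mul
    apply Finset.measurable_sum
    intro u _
    have h1 : Measurable fun p : ((Fin d → ℤ) → A) × ((Fin d → ℤ) → B) =>
        (p.1 u, p.2 u) :=
      ((measurable_pi_apply u).comp measurable_fst).prodMk
        ((measurable_pi_apply u).comp measurable_snd)
    exact hρm.comp h1
  have hqmeas : ∀ n : ℕ, Measurable fun x => q x n := by
    intro n
    have heq : (fun x => q x n) = fun x =>
        Qfield (Prod.mk x ⁻¹' {p : ((Fin d → ℤ) → A) × ((Fin d → ℤ) → B) |
          ((n : ℝ) ^ d)⁻¹ * ∑ u ∈ cube n, ρ (p.1 u) (p.2 u) ≤ D}) :=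
      funext fun x => by rw [hq]; rfl
    rw [heq]
    exact measurable_measure_prodMk_left (hS0 n)
  -- q is never infinite
  have hqne : ∀ x n, q x n ≠ ⊤ := fun x n => by rw [hq]; exact measure_ne_top _ _
  -- the box of translates
  set VBox : ℕ → Finset (Fin d → ℤ) :=
    fun k => Finset.Icc (fun _ => (0 : ℤ)) (fun _ => (k : ℤ) - 1) with hVBox
  have hVmem : ∀ (k : ℕ) (v : Fin d → ℤ),
      (∀ j, 0 ≤ v j ∧ v j ≤ (k : ℤ) - 1) ↔ v ∈ VBox k := by
    intro k v
    simp [hVBox, Finset.mem_Icc, Pi.le_def, forall_and]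
  have hVcard : ∀ k : ℕ, (VBox k).card = k ^ d := by
    intro k
    rw [hVBox]
    rw [Pi.card_Icc]
    simp [Int.card_Icc]
  -- stationarity: each translate has probability q x n
  have hstat : ∀ (x : (Fin d → ℤ) → A) (n : ℕ) (v : Fin d → ℤ),
      Qfield {y | ((n : ℝ) ^ d)⁻¹ * ∑ u ∈ cube n, ρ (x u) (y (v + u)) ≤ D} = q x n := by
    intro x n v
    have hSy : MeasurableSet {y : (Fin d → ℤ) → B |
        ((n : ℝ) ^ d)⁻¹ * ∑ u ∈ cube n, ρ (x u) (y u) ≤ D} := by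
      apply measurableSet_le _ measurable_const
      apply Measurable.const_mul
      apply Finset.measurable_sum
      intro u _
      exact (hρm.comp (measurable_const.prodMk (measurable_pi_apply u)))
    have hpre : (fun y : (Fin d → ℤ) → B => fun u => y (u + v)) ⁻¹'
        {y | ((n : ℝ) ^ d)⁻¹ * ∑ u ∈ cube n, ρ (x u) (y u) ≤ D}
        = {y | ((n : ℝ) ^ d)⁻¹ * ∑ u ∈ cube n, ρ (x u) (y (v + u)) ≤ D} := by
      ext y
      simp only [Set.mem_preimage, Set.mem_setOf_eq]
      have hsum_eq : ∑ u ∈ cube n, ρ (x u) (y (u + v))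
          = ∑ u ∈ cube n, ρ (x u) (y (v + u)) :=
        Finset.sum_congr rfl fun u _ => by rw [add_comm]
      rw [hsum_eq]
    rw [hq, ← hpre, (hQstat v).measure_preimage hSy.nullMeasurableSet]
  -- union bound over translates
  have hub : ∀ (x : (Fin d → ℤ) → A) (n k : ℕ),
      Qfield {y | ∃ v : Fin d → ℤ, (∀ j, 0 ≤ v j ∧ v j ≤ (k : ℤ) - 1) ∧
        ((n : ℝ) ^ d)⁻¹ * ∑ u ∈ cube n, ρ (x u) (y (v + u)) ≤ D}
        ≤ (k ^ d : ℕ) * q x n := by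
    intro x n k
    have hun : {y : (Fin d → ℤ) → B | ∃ v : Fin d → ℤ, (∀ j, 0 ≤ v j ∧ v j ≤ (k : ℤ) - 1) ∧
        ((n : ℝ) ^ d)⁻¹ * ∑ u ∈ cube n, ρ (x u) (y (v + u)) ≤ D}
        = ⋃ v ∈ VBox k,
          {y | ((n : ℝ) ^ d)⁻¹ * ∑ u ∈ cube n, ρ (x u) (y (v + u)) ≤ D} := by
      ext y
      simp only [Set.mem_setOf_eq, Set.mem_iUnion, exists_prop]
      constructor
      · rintro ⟨v, hv1, hv2⟩; exact ⟨v, (hVmem k v).1 hv1, hv2⟩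
      · rintro ⟨v, hv1, hv2⟩; exact ⟨v, (hVmem k v).2 hv1, hv2⟩
    rw [hun]
    calc Qfield (⋃ v ∈ VBox k, _) ≤ ∑ v ∈ VBox k,
          Qfield {y | ((n : ℝ) ^ d)⁻¹ * ∑ u ∈ cube n, ρ (x u) (y (v + u)) ≤ D} :=
        measure_biUnion_finset_le _ _
      _ = ∑ _v ∈ VBox k, q x n := Finset.sum_congr rfl fun v _ => hstat x n v
      _ = (VBox k).card • q x n := Finset.sum_const _
      _ = (k ^ d : ℕ) * q x n := by rw [hVcard k, nsmul_eq_mul]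
  -- the bad sets
  set Bn : ℕ → Set (((Fin d → ℤ) → A) × ((Fin d → ℤ) → B)) :=
    fun n => {xy | ∃ k : ℕ, 1 ≤ k ∧ (k : ℝ) ^ d * (q xy.1 n).toReal < t n ∧
      ∃ v : Fin d → ℤ, (∀ j, 0 ≤ v j ∧ v j ≤ (k : ℤ) - 1) ∧ g n v xy ≤ D} with hBn
  have hBmeas : ∀ n, MeasurableSet (Bn n) := by
    intro n
    have : Bn n = ⋃ k : ℕ,
        ({xy : ((Fin d → ℤ) → A) × ((Fin d → ℤ) → B) |
            1 ≤ k ∧ (k : ℝ) ^ d * (q xy.1 n).toReal < t n} ∩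
          ⋃ v ∈ VBox k, {xy | g n v xy ≤ D}) := by
      ext xy
      simp only [hBn, Set.mem_setOf_eq, Set.mem_iUnion, Set.mem_inter_iff, exists_prop]
      constructor
      · rintro ⟨k, h1, h2, v, hv1, hv2⟩
        exact ⟨k, ⟨h1, h2⟩, v, (hVmem k v).1 hv1, hv2⟩
      · rintro ⟨k, ⟨h1, h2⟩, v, hv1, hv2⟩
        exact ⟨k, h1, h2, v, (hVmem k v).2 hv1, hv2⟩
    rw [this]
    apply MeasurableSet.iUnion
    intro k
    apply MeasurableSet.inter
    · have hm : Measurable fun xy : ((Fin d → ℤ) → A) × ((Fin d → ℤ) → B) =>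
          (k : ℝ) ^ d * (q xy.1 n).toReal :=
        (((hqmeas n).comp measurable_fst).ennreal_toReal).const_mul _
      have : {xy : ((Fin d → ℤ) → A) × ((Fin d → ℤ) → B) |
          1 ≤ k ∧ (k : ℝ) ^ d * (q xy.1 n).toReal < t n}
          = {xy | 1 ≤ k} ∩ {xy | (k : ℝ) ^ d * (q xy.1 n).toReal < t n} := rfl
      rw [this]
      exact (MeasurableSet.const _).inter (measurableSet_lt hm measurable_const)
    · exact MeasurableSet.biUnion (Finset.countable_toSet _)
        fun v _ => measurableSet_le (hg n v) measurable_const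
  -- the slice bound
  have hslice : ∀ (n : ℕ) (x : (Fin d → ℤ) → A),
      Qfield (Prod.mk x ⁻¹' Bn n) ≤ ENNReal.ofReal (t n) := by
    intro n x
    by_cases hq0 : q x n = 0
    · -- q = 0 : the union of all match sets is null
      have hsub : Prod.mk x ⁻¹' Bn n ⊆ ⋃ k : ℕ,
          {y | ∃ v : Fin d → ℤ, (∀ j, 0 ≤ v j ∧ v j ≤ (k : ℤ) - 1) ∧
            ((n : ℝ) ^ d)⁻¹ * ∑ u ∈ cube n, ρ (x u) (y (v + u)) ≤ D} := by
        rintro y ⟨k, _, _, v, hv1, hv2⟩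
        exact Set.mem_iUnion.2 ⟨k, v, hv1, hv2⟩
      refine le_trans (measure_mono hsub) ?_
      have : Qfield (⋃ k : ℕ,
          {y | ∃ v : Fin d → ℤ, (∀ j, 0 ≤ v j ∧ v j ≤ (k : ℤ) - 1) ∧
            ((n : ℝ) ^ d)⁻¹ * ∑ u ∈ cube n, ρ (x u) (y (v + u)) ≤ D}) = 0 := by
        apply measure_iUnion_null
        intro k
        have := hub x n k
        rw [hq0, mul_zero] at this
        exact le_antisymm this zero_le
      rw [this]
      exact zero_le
    · -- q > 0 : the valid k's are bounded; use the largest one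
      have hqr : 0 < (q x n).toReal := ENNReal.toReal_pos hq0 (hqne x n)
      set V : Set ℕ := {k : ℕ | 1 ≤ k ∧ (k : ℝ) ^ d * (q x n).toReal < t n} with hV
      by_cases hVne : V.Nonempty
      · have hVbdd : BddAbove V := by
          refine ⟨Nat.ceil (t n / (q x n).toReal), fun k hk => ?_⟩
          obtain ⟨hk1, hk2⟩ := hk
          have hk' : (k : ℝ) ≤ (k : ℝ) ^ d := by
            calc (k : ℝ) = (k : ℝ) ^ 1 := (pow_one _).symm
              _ ≤ (k : ℝ) ^ d := pow_le_pow_right₀ (by exact_mod_cast hk1) hd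
          have : (k : ℝ) < t n / (q x n).toReal := by
            rw [lt_div_iff₀ hqr]
            exact lt_of_le_of_lt (by nlinarith) hk2
          exact le_of_lt (Nat.lt_ceil.2 this)
        set k₀ : ℕ := sSup V with hk₀def
        have hk₀ : k₀ ∈ V := Nat.sSup_mem hVne hVbdd
        have hsub : Prod.mk x ⁻¹' Bn n ⊆
            {y | ∃ v : Fin d → ℤ, (∀ j, 0 ≤ v j ∧ v j ≤ (k₀ : ℤ) - 1) ∧
              ((n : ℝ) ^ d)⁻¹ * ∑ u ∈ cube n, ρ (x u) (y (v + u)) ≤ D} := by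
          rintro y ⟨k, hk1, hk2, v, hv1, hv2⟩
          have hkk₀ : k ≤ k₀ := le_csSup hVbdd ⟨hk1, hk2⟩
          refine ⟨v, fun j => ⟨(hv1 j).1, ?_⟩, hv2⟩
          have := (hv1 j).2
          have : v j ≤ (k : ℤ) - 1 := this
          omega
        refine le_trans (measure_mono hsub) (le_trans (hub x n k₀) ?_)
        -- (k₀^d) * q ≤ ofReal (t n)
        have hne : ((k₀ ^ d : ℕ) : ENNReal) * q x n ≠ ⊤ :=
          ENNReal.mul_ne_top (ENNReal.natCast_ne_top _) (hqne x n)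
        rw [ENNReal.le_ofReal_iff_toReal_le hne (ht0 n), ENNReal.toReal_mul]
        have : (((k₀ ^ d : ℕ) : ENNReal)).toReal = (k₀ : ℝ) ^ d := by
          simp
        rw [this]
        exact le_of_lt hk₀.2
      · have hsub : Prod.mk x ⁻¹' Bn n ⊆ (∅ : Set ((Fin d → ℤ) → B)) := by
          rintro y ⟨k, hk1, hk2, _⟩
          exact absurd ⟨hk1, hk2⟩ (fun h => hVne ⟨k, h⟩)
        rw [measure_mono_null hsub measure_empty]
        exact zero_le
  -- the product-measure bound
  have hBle : ∀ n : ℕ, (Pfield.prod Qfield) (Bn n) ≤ ENNReal.ofReal (t n) := by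
    intro n
    rw [Measure.prod_apply (hBmeas n)]
    calc ∫⁻ x, Qfield (Prod.mk x ⁻¹' Bn n) ∂Pfield
        ≤ ∫⁻ _x, ENNReal.ofReal (t n) ∂Pfield := lintegral_mono fun x => hslice n x
      _ = ENNReal.ofReal (t n) := by rw [lintegral_const, measure_univ, mul_one]
  -- summability and Borel–Cantelli
  have htsummable : Summable t := by
    have : t = fun n : ℕ => 1 / (n : ℝ) ^ (1 + ε) := by
      funext n
      show (n : ℝ) ^ (-(1 + ε)) = 1 / (n : ℝ) ^ (1 + ε)
      rw [Real.rpow_neg (Nat.cast_nonneg n), one_div]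
    rw [this]
    exact Real.summable_one_div_nat_rpow.2 (by linarith)
  have hsum : (∑' n, (Pfield.prod Qfield) (Bn n)) ≠ ⊤ := by
    refine ne_top_of_le_ne_top ?_ (ENNReal.tsum_le_tsum hBle)
    rw [← ENNReal.ofReal_tsum_of_nonneg ht0 htsummable]
    exact ENNReal.ofReal_ne_top
  have hae : ∀ᵐ xy ∂(Pfield.prod Qfield), ∀ᶠ n in atTop, xy ∉ Bn n :=
    ae_eventually_notMem hsum
  -- conclusion
  filter_upwards [hae] with xy hxy
  filter_upwards [hxy, eventually_ge_atTop 1] with n hn hn1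
  rcases Nat.eq_zero_or_pos (W n xy) with hw | hw
  · rw [hw]
    have : ((0 : ℕ) : ℝ) ^ d * (q xy.1 n).toReal = 0 := by
      rw [Nat.cast_zero, zero_pow (by omega : d ≠ 0), zero_mul]
    rw [this, Real.log_zero]
    have hlog : 0 ≤ Real.log n := Real.log_natCast_nonneg n
    nlinarith
  · -- W n xy ≥ 1 : it attains its infimum
    set w := W n xy with hwdef
    have hSne : {i : ℕ | 1 ≤ i ∧ ∃ v : Fin d → ℤ,
        (∀ j, 0 ≤ v j ∧ v j ≤ (i : ℤ) - 1) ∧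
        ((n : ℝ) ^ d)⁻¹ * ∑ u ∈ cube n, ρ (xy.1 u) (xy.2 (v + u)) ≤ D}.Nonempty := by
      by_contra h
      rw [Set.not_nonempty_iff_eq_empty] at h
      have := hW n xy
      rw [h, Nat.sInf_empty] at this
      omega
    have hmem := Nat.sInf_mem hSne
    rw [← hW n xy] at hmem
    obtain ⟨hw1, v, hv1, hv2⟩ := hmem
    -- xy ∉ Bn n with k = w gives the lower bound
    have hnot : ¬ ((w : ℝ) ^ d * (q xy.1 n).toReal < t n) := by
      intro hlt
      exact hn ⟨w, hw1, hlt, v, hv1, hv2⟩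
    push_neg at hnot
    have hnpos : (0 : ℝ) < n := by exact_mod_cast hn1
    have htpos : 0 < t n := Real.rpow_pos_of_pos hnpos _
    calc -(1 + ε) * Real.log n = Real.log (t n) := by rw [ht, Real.log_rpow hnpos]
      _ ≤ Real.log ((w : ℝ) ^ d * (q xy.1 n).toReal) := Real.log_le_log htpos hnot
end
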